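/- Let F be a field of characteristic 0 and let (D, ≺, ≻) be a dendriform dialgebra over F. Then there exist an associative F-algebra A equipped with an F-linear operator P : A → A making A a Rota-Baxter algebra of weight 0 (i.e. P(a)·P(b) = P(P(a)·b) + P(a·P(b)) for all a, b ∈ A), and an injective F-linear map φ : D → A such that φ(x ≺ y) = φ(x)·P(φ(y)) and φ(x ≻ y) = P(φ(x))·φ(y) for all x, y ∈ D. In other words, every dendriform dialgebra over a field of characteristic 0 embeds into a Rota-Baxter algebra of weight 0 as a dendriform subdialgebra. -/
import Mathlib


/-
STATEMENT 0: Every dendriform dialgebra `(D, ≺, ≻)` over a field `F` of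
characteristic 0 embeds into a Rota-Baxter algebra of weight 0: there exist an
associative `F`-algebra `A` with an `F`-linear operator `P : A → A` satisfying
`P a * P b = P (P a * b) + P (a * P b)` (Rota-Baxter of weight 0), and an
injective `F`-linear map `φ : D → A` with `φ (x ≺ y) = φ x * P (φ y)` and
`φ (x ≻ y) = P (φ x) * φ y` for all `x y : D`.
-/

universe u v

theorem dendriform_embeds_into_rotaBaxter_of_weight_zero
    (F : Type u) [Field F] [CharZero F]
    (D : Type v) [AddCommGroup D] [Module F D]
    (prec succ : D →ₗ[F] D →ₗ[F] D)
    (ax1 : ∀ x y z : D, prec (prec x y) z = prec x (prec y z + succ y z))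
    (ax2 : ∀ x y z : D, prec (succ x y) z = succ x (prec y z))
    (ax3 : ∀ x y z : D, succ (prec x y + succ x y) z = succ x (succ y z)) :
    ∃ (A : Type (max u v)) (_ : Ring A) (_ : Algebra F A) (P : A →ₗ[F] A)
      (φ : D →ₗ[F] A),
      (∀ a b : A, P a * P b = P (P a * b) + P (a * P b)) ∧
      Function.Injective φ ∧
      (∀ x y : D, φ (prec x y) = φ x * P (φ y)) ∧
      (∀ x y : D, φ (succ x y) = P (φ x) * φ y) := by
  classical
  -- reoriented axioms
  have h1 : ∀ x y z : D, prec (prec x y) z = prec x (prec y z) + prec x (succ y z) := by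
    intro x y z; rw [ax1, map_add]
  have h3 : ∀ x y z : D, succ (prec x y) z = succ x (succ y z) - succ (succ x y) z := by
    intro x y z
    have h := ax3 x y z
    rw [map_add, LinearMap.add_apply] at h
    exact eq_sub_of_add_eq h
  set mul' : (F × D × D) → (F × D × D) → (F × D × D) := fun a b =>
    (a.1 * b.1,
     a.1 • b.2.1 + b.1 • a.2.1 + prec a.2.1 b.2.1 + succ a.2.1 b.2.1,
     a.1 • b.2.2 + b.1 • a.2.2 + succ a.2.1 b.2.2 + prec a.2.2 b.2.1) with hmul
  have hassoc : ∀ a b c : F × D × D, mul' (mul' a b) c = mul' a (mul' b c) := by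
    rintro ⟨a1, a2, a3⟩ ⟨b1, b2, b3⟩ ⟨c1, c2, c3⟩
    simp only [hmul, Prod.mk.injEq]
    refine ⟨by ring, ?_, ?_⟩ <;>
    · simp only [map_add, map_smul, LinearMap.add_apply, LinearMap.smul_apply,
        smul_add, smul_smul, h1, ax2, h3]
      ring_nf
      abel
  letI ringA : Ring (F × D × D) :=
    { (inferInstance : AddCommGroup (F × D × D)) with
      mul := mul'
      one := (1, 0, 0)
      mul_assoc := hassoc
      one_mul := by
        rintro ⟨a1, a2, a3⟩
        show mul' (1, 0, 0) (a1, a2, a3) = (a1, a2, a3)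
        simp [hmul]
      mul_one := by
        rintro ⟨a1, a2, a3⟩
        show mul' (a1, a2, a3) (1, 0, 0) = (a1, a2, a3)
        simp [hmul]
      left_distrib := by
        rintro ⟨a1, a2, a3⟩ ⟨b1, b2, b3⟩ ⟨c1, c2, c3⟩
        show mul' _ _ = mul' _ _ + mul' _ _
        simp only [hmul, Prod.mk.injEq, map_add, LinearMap.add_apply, smul_add, add_smul, Prod.mk_add_mk]
        refine ⟨by ring, by abel, by abel⟩
      right_distrib := by
        rintro ⟨a1, a2, a3⟩ ⟨b1, b2, b3⟩ ⟨c1, c2, c3⟩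
        show mul' _ _ = mul' _ _ + mul' _ _
        simp only [hmul, Prod.mk.injEq, map_add, LinearMap.add_apply, smul_add, add_smul, Prod.mk_add_mk]
        refine ⟨by ring, by abel, by abel⟩
      zero_mul := by
        rintro ⟨a1, a2, a3⟩
        show mul' _ _ = _
        simp [hmul]
      mul_zero := by
        rintro ⟨a1, a2, a3⟩
        show mul' _ _ = _
        simp [hmul] }
  letI algA : Algebra F (F × D × D) :=
    Algebra.ofModule
      (by
        rintro r ⟨a1, a2, a3⟩ ⟨b1, b2, b3⟩
        show mul' _ _ = r • mul' _ _
        simp only [hmul, Prod.smul_mk, smul_eq_mul, map_smul, LinearMap.smul_apply, smul_add,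
          smul_smul, Prod.mk.injEq]
        refine ⟨by ring, ?_, ?_⟩ <;> · ring_nf; try abel)
      (by
        rintro r ⟨a1, a2, a3⟩ ⟨b1, b2, b3⟩
        show mul' _ _ = r • mul' _ _
        simp only [hmul, Prod.smul_mk, smul_eq_mul, map_smul, LinearMap.smul_apply, smul_add,
          smul_smul, Prod.mk.injEq]
        refine ⟨by ring, ?_, ?_⟩ <;> · ring_nf; try abel)
  refine ⟨F × D × D, ringA, algA,
    { toFun := fun a => (0, a.2.2, 0)
      map_add' := by rintro ⟨a1, a2, a3⟩ ⟨b1, b2, b3⟩; simp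
      map_smul' := by rintro r ⟨a1, a2, a3⟩; simp },
    { toFun := fun x => (0, 0, x)
      map_add' := by intro x y; simp
      map_smul' := by intro r x; simp },
    ?_, ?_, ?_, ?_⟩
  · rintro ⟨a1, a2, a3⟩ ⟨b1, b2, b3⟩
    show mul' _ _ = _
    simp only [LinearMap.coe_mk, AddHom.coe_mk]
    show _ = (0, (mul' _ _).2.2, 0) + (0, (mul' _ _).2.2, 0)
    simp [hmul]
    abel
  · rintro x y h
    simpa [Prod.mk.injEq] using h
  · intro x y
    show (0, 0, prec x y) = mul' (0, 0, x) (0, y, 0)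
    simp [hmul]
  · intro x y
    show (0, 0, succ x y) = mul' (0, x, 0) (0, 0, y)
    simp [hmul]
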